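/- The function g(u) = 1/log(1 + 1/u) - u is strictly increasing on (0, ∞). -/

import Mathlib

/-!
The derivative of `g u = 1 / log (1 + 1/u) - u` is `1 / (u (u + 1) L²) - 1` with
`L = log (1 + 1/u) = log (u + 1) - log u`, so `g` increases exactly because the geometric mean
`√(u (u + 1))` is smaller than the logarithmic mean `1 / L` of `u` and `u + 1`. After scaling,
that inequality is `2 log t < t - 1/t` for `t > 1`, i.e. `y < sinh y` at `y = log t > 0`.
-/

open Real Set

lemma two_mul_log_lt_sub_inv {t : ℝ} (ht : 1 < t) : 2 * log t < t - t⁻¹ := by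
  have h := self_lt_sinh_iff.mpr (log_pos ht)
  rw [sinh_log (by linarith)] at h
  linarith

/-- The geometric–logarithmic mean inequality `√x < (x - 1) / log x` for `1 < x`, squared. -/
lemma mul_log_sq_lt_sub_one_sq {x : ℝ} (hx : 1 < x) : x * log x ^ 2 < (x - 1) ^ 2 := by
  set t := √x
  have ht : 1 < t := by rw [lt_sqrt zero_le_one]; simpa using hx
  have hx_eq : x = t ^ 2 := (sq_sqrt (by linarith)).symm
  have hlog : log x = 2 * log t := by rw [hx_eq, log_pow]; norm_num
  have hsq : (2 * log t) ^ 2 < (t - t⁻¹) ^ 2 :=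
    pow_lt_pow_left₀ (two_mul_log_lt_sub_inv ht) (by linarith [log_pos ht]) two_ne_zero
  calc x * log x ^ 2 = t ^ 2 * (2 * log t) ^ 2 := by rw [hlog, hx_eq]
    _ < t ^ 2 * (t - t⁻¹) ^ 2 := by gcongr
    _ = (x - 1) ^ 2 := by rw [hx_eq]; field_simp

lemma mul_mul_log_one_add_one_div_sq_lt_one {u : ℝ} (hu : 0 < u) :
    u * (u + 1) * log (1 + 1 / u) ^ 2 < 1 := by
  have h := mul_log_sq_lt_sub_one_sq (x := 1 + 1 / u) (by simp [hu])
  calc u * (u + 1) * log (1 + 1 / u) ^ 2 = u ^ 2 * ((1 + 1 / u) * log (1 + 1 / u) ^ 2) := by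
        field_simp
    _ < u ^ 2 * (1 + 1 / u - 1) ^ 2 := by gcongr
    _ = 1 := by field_simp; ring

lemma hasDerivAt_one_div_log_one_add_one_div_sub {u : ℝ} (hu : 0 < u) :
    HasDerivAt (fun u : ℝ => 1 / log (1 + 1 / u) - u)
      (1 / (u * (u + 1) * log (1 + 1 / u) ^ 2) - 1) u := by
  have hL : log (1 + 1 / u) ≠ 0 := (log_pos (by simp [hu])).ne'
  have hinner : HasDerivAt (fun u : ℝ => 1 + 1 / u) (-(u ^ 2)⁻¹) u := by
    simpa [one_div] using (hasDerivAt_inv hu.ne').const_add 1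
  have h := ((hinner.log (by positivity)).fun_inv hL).fun_sub (hasDerivAt_id' u)
  simp only [← one_div] at h
  exact h.congr_deriv (by field_simp)

theorem g_strictMono :
    StrictMonoOn (fun u : ℝ => 1 / Real.log (1 + 1 / u) - u) (Set.Ioi (0 : ℝ)) := by
  have hderiv (u : ℝ) (hu : u ∈ Ioi 0) :=
    hasDerivAt_one_div_log_one_add_one_div_sub (mem_Ioi.mp hu)
  refine strictMonoOn_of_hasDerivWithinAt_pos (convex_Ioi 0)
    (fun u hu => (hderiv u hu).continuousAt.continuousWithinAt)
    (fun u hu => (hderiv u (interior_subset hu)).hasDerivWithinAt) fun u hu => ?_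
  rw [interior_Ioi, mem_Ioi] at hu
  have hL : 0 < log (1 + 1 / u) := log_pos (by simp [hu])
  rw [sub_pos, lt_one_div one_pos (by positivity), div_one]
  exact mul_mul_log_one_add_one_div_sq_lt_one hu
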